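/- Let n ≥ 2 and let g1, g2, g3 be pairwise distinct elements of the dihedral Artin group DA_n, with associated precells having vertex sets V(g_i) and edge sets E(g_i). Suppose that (1) E(g1) ∩ E(g2) ≠ ∅ (the precells of g1 and g2 share an edge), (2) E(g1) ∩ E(g3) ≠ ∅, and (3) the set V(g1) ∩ V(g2) ∩ V(g3) has at most one element. Then V(g2) ∩ V(g3) has at most one element (the precells of g2 and g3 intersect in at most one point). -/

import Mathlib

/-- The alternating product `x y x y ⋯` with `n` factors. -/
def altProd {G : Type*} [Monoid G] : ℕ → G → G → G
  | 0, _, _ => 1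
  | n + 1, x, y => x * altProd n y x

/-- The alternating word `x y x y ⋯` with `n` letters, as a list. -/
def altList : ℕ → Bool → Bool → List Bool
  | 0, _, _ => []
  | n + 1, x, y => x :: altList n y x

/-- The relation `prod(a,b;n) = prod(b,a;n)` of the dihedral Artin group, with
`a := true` and `b := false`. -/
def dihedralRels (n : ℕ) : Set (FreeGroup Bool) :=
  { altProd n (FreeGroup.of true) (FreeGroup.of false) *
      (altProd n (FreeGroup.of false) (FreeGroup.of true))⁻¹ }

/-- The dihedral Artin group `DA_n = ⟨a, b ∣ prod(a,b;n) = prod(b,a;n)⟩`. -/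
abbrev DihedralArtinGroup (n : ℕ) := PresentedGroup (dihedralRels n)

/-- The standard generators of `DA_n` (`a := true`, `b := false`). -/
def daGen (n : ℕ) (s : Bool) : DihedralArtinGroup n := PresentedGroup.of s

/-- The image in `DA_n` of a word in the generators `a, b`. -/
def daWord (n : ℕ) (l : List Bool) : DihedralArtinGroup n := (l.map (daGen n)).prod

/-- The vertex set of the precell with left tip `g`: elements `g·π(p)` where `p` is a
prefix of `prod(a,b;n)` or of `prod(b,a;n)`. -/
def precellVerts (n : ℕ) (g : DihedralArtinGroup n) : Set (DihedralArtinGroup n) :=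
  { x | ∃ p : List Bool,
      (p <+: altList n true false ∨ p <+: altList n false true) ∧
        x = g * daWord n p }

/-- The edge set of the precell with left tip `g`: edges `(g·π(p), s)` of the Cayley
graph where `p` and `p ++ [s]` are consecutive prefixes of `prod(a,b;n)` or of
`prod(b,a;n)`. -/
def precellEdges (n : ℕ) (g : DihedralArtinGroup n) :
    Set (DihedralArtinGroup n × Bool) :=
  { e | ∃ (p : List Bool) (s : Bool),
      ((p <+: altList n true false ∧ p ++ [s] <+: altList n true false) ∨
        (p <+: altList n false true ∧ p ++ [s] <+: altList n false true)) ∧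
      e = (g * daWord n p, s) }

/-!
Say that `P(g·π(prod(δ,¬δ;d)))` hangs off `P(g)` when `0 < d < n`. Two precells sharing an edge
are related in this way, in one direction or the other. Since `z ↦ ι(z)·Δ`, for the automorphism
`ι : a ↦ a⁻¹, b ↦ b⁻¹`, maps `P(g)` onto `P(ι g)` and reverses the relation, either both `P(g₂)`
and `P(g₃)` hang off `P(g₁)`, or `P(g₂)` hangs off `P(g₁)`, which hangs off `P(g₃)`. In the first
case, if they hang off the same side of `P(g₁)` the triple intersection contains both `g₁Δ` and
the left tip of the farther one, and otherwise `g₁Δ` is the only common vertex of `P(g₂)` and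
`P(g₃)`; in the second case `P(g₂) ∩ P(g₃) ⊆ P(g₁)`.

The relations between products of alternating words that this needs all come from one invariant.
With `r`, `t` the generators of `ℤ/n ∗ ℤ/2`, `a ↦ r t`, `b ↦ t r` defines a homomorphism
`DA_n → ℤ/n ∗ ℤ/2`. Attach `a` to the factor `ℤ/n` and `b` to `ℤ/2`. An alternating word of
length `0 < k < n` starting with `γ`, followed by any element whose reduced image does not start
in the factor of the `(k+1)`-st letter, has reduced image starting in the factor of `γ`: the
factor records the first letter of the left-greedy normal form.
-/

/-- The letter in position `k` of the alternating word `γ (!γ) γ ⋯`. -/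
def altLetter (γ : Bool) (k : ℕ) : Bool := xor γ k.bodd

@[simp]
theorem altLetter_zero (γ : Bool) : altLetter γ 0 = γ := by
  simp [altLetter]

theorem altLetter_succ (γ : Bool) (k : ℕ) : altLetter γ (k + 1) = altLetter (!γ) k := by
  cases γ <;> simp [altLetter, Nat.bodd_succ]

theorem altLetter_not (γ : Bool) (k : ℕ) : altLetter (!γ) k = !altLetter γ k := by
  cases γ <;> simp [altLetter]

theorem altLetter_add (γ : Bool) (i j : ℕ) :
    altLetter γ (i + j) = altLetter (altLetter γ i) j := by
  simp [altLetter, Nat.bodd_add]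

theorem altLetter_left_injective (k : ℕ) : Function.Injective fun γ => altLetter γ k := by
  intro γ γ' h
  simpa [altLetter] using h

theorem altList_add (γ : Bool) (i j : ℕ) :
    altList (i + j) γ (!γ) = altList i γ (!γ) ++ altList j (altLetter γ i) (!altLetter γ i) := by
  induction i generalizing γ with
  | zero => simp [altList]
  | succ i ih =>
    rw [Nat.add_right_comm]
    simpa [altList, altLetter_succ] using ih (!γ)

theorem altList_succ_eq_append (γ : Bool) (k : ℕ) :
    altList (k + 1) γ (!γ) = altList k γ (!γ) ++ [altLetter γ k] := by
  rw [altList_add]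
  rfl

@[simp]
theorem length_altList (k : ℕ) (x y : Bool) : (altList k x y).length = k := by
  induction k generalizing x y with
  | zero => rfl
  | succ k ih => simp [altList, ih]

theorem take_altList {i m : ℕ} (h : i ≤ m) (x y : Bool) :
    (altList m x y).take i = altList i x y := by
  induction i generalizing m x y with
  | zero => rfl
  | succ i ih =>
    obtain ⟨m, rfl⟩ := Nat.exists_eq_add_of_lt h
    simp [altList, ih (by omega : i ≤ i + m)]

theorem prefix_altList_iff {p : List Bool} {m : ℕ} {γ : Bool} :
    p <+: altList m γ (!γ) ↔ ∃ i ≤ m, p = altList i γ (!γ) := by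
  constructor
  · intro h
    have hle : p.length ≤ m := by simpa using h.length_le
    refine ⟨p.length, hle, ?_⟩
    conv_lhs => rw [List.prefix_iff_eq_take.1 h]
    exact take_altList hle _ _
  · rintro ⟨i, hi, rfl⟩
    rw [List.prefix_iff_eq_take, length_altList, take_altList hi]

theorem append_singleton_prefix_altList {p : List Bool} {s : Bool} {m : ℕ} {γ : Bool}
    (h : p ++ [s] <+: altList m γ (!γ)) :
    ∃ i < m, p = altList i γ (!γ) ∧ s = altLetter γ i := by
  obtain ⟨j, hj, hpj⟩ := prefix_altList_iff.1 h
  obtain ⟨i, rfl⟩ : ∃ i, j = i + 1 :=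
    ⟨p.length, by simpa using (congrArg List.length hpj).symm⟩
  rw [altList_succ_eq_append] at hpj
  obtain ⟨hp, hs⟩ := List.append_inj' hpj rfl
  exact ⟨i, hj, hp, List.singleton_injective hs⟩

theorem reverse_altList (γ : Bool) (k : ℕ) :
    (altList k γ (!γ)).reverse = altList k (!altLetter γ k) (altLetter γ k) := by
  induction k with
  | zero => rfl
  | succ k ih =>
    rw [altList_succ_eq_append, List.reverse_append, ih, altLetter_succ, altLetter_not]
    simp [altList]

theorem map_altProd {M N F : Type*} [Monoid M] [Monoid N] [FunLike F M N]
    [MonoidHomClass F M N] (f : F) (k : ℕ) (x y : M) :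
    f (altProd k x y) = altProd k (f x) (f y) := by
  induction k generalizing x y with
  | zero => simp [altProd]
  | succ k ih => simp [altProd, ih]

theorem prod_map_altList {M : Type*} [Monoid M] (f : Bool → M) (k : ℕ) (x y : Bool) :
    ((altList k x y).map f).prod = altProd k (f x) (f y) := by
  induction k generalizing x y with
  | zero => rfl
  | succ k ih => simp [altList, altProd, ih]

theorem altProd_self {M : Type*} [Monoid M] (k : ℕ) (x : M) : altProd k x x = x ^ k := by
  induction k with
  | zero => simp [altProd]
  | succ k ih => rw [altProd, ih, pow_succ']

theorem altProd_mul_involution {G : Type*} [Group G] {t : G} (ht : t * t = 1) (r : G) (k : ℕ) :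
    altProd k (r * t) (t * r) = r ^ k * (if k.bodd then t else 1) ∧
      altProd k (t * r) (r * t) = t * r ^ k * (if k.bodd then 1 else t) := by
  induction k with
  | zero => simp [altProd, ht]
  | succ k ih =>
    have htt (x : G) : t * (t * x) = x := by rw [← mul_assoc, ht, one_mul]
    rw [altProd, altProd, ih.1, ih.2, Nat.bodd_succ]
    cases k.bodd <;> simp [pow_succ', mul_assoc, htt]

theorem Monoid.CoprodI.Word.fstIdx_of_smul {ι : Type*} {M : ι → Type*} [∀ i, Monoid (M i)]
    [DecidableEq ι] [∀ i, DecidableEq (M i)] {i : ι} {m : M i} (hm : m ≠ 1) {w : Word M}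
    (hw : w.fstIdx ≠ some i) : (of m • w).fstIdx = some i := by
  rw [← Word.cons_eq_smul (h1 := hw) (h2 := hm), Word.fstIdx_cons]

namespace DihedralArtinGroup

variable {n : ℕ}

theorem daWord_append (l₁ l₂ : List Bool) :
    daWord n (l₁ ++ l₂) = daWord n l₁ * daWord n l₂ := by
  simp [daWord]

theorem altProd_daGen_comm :
    altProd n (daGen n true) (daGen n false) = altProd n (daGen n false) (daGen n true) := by
  have h : PresentedGroup.mk (dihedralRels n)
      (altProd n (.of true) (.of false) * (altProd n (.of false) (.of true))⁻¹) = 1 :=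
    (QuotientGroup.eq_one_iff _).2 (Subgroup.subset_normalClosure rfl)
  rwa [map_mul, map_inv, map_altProd, map_altProd, mul_inv_eq_one] at h

/-- `π(prod(γ, ¬γ; k))` in the notation of the paper. -/
def daAlt (n : ℕ) (γ : Bool) (k : ℕ) : DihedralArtinGroup n := daWord n (altList k γ (!γ))

@[simp]
theorem daAlt_zero (γ : Bool) : daAlt n γ 0 = 1 := rfl

theorem daAlt_add (γ : Bool) (i j : ℕ) :
    daAlt n γ (i + j) = daAlt n γ i * daAlt n (altLetter γ i) j := by
  rw [daAlt, altList_add, daWord_append]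
  rfl

def garside (n : ℕ) : DihedralArtinGroup n := daAlt n true n

theorem daAlt_self (γ : Bool) : daAlt n γ n = garside n := by
  cases γ
  · simp only [garside, daAlt, daWord, prod_map_altList]
    exact altProd_daGen_comm.symm
  · rfl

theorem daAlt_mul_daAlt_sub {d : ℕ} (hd : d ≤ n) (γ : Bool) :
    daAlt n γ d * daAlt n (altLetter γ d) (n - d) = garside n := by
  rw [← daAlt_add, Nat.add_sub_cancel' hd, daAlt_self]

theorem daAlt_self_add (γ : Bool) (k : ℕ) :
    daAlt n γ (n + k) = garside n * daAlt n (altLetter γ n) k := by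
  rw [daAlt_add, daAlt_self]

def lift {G : Type*} [Group G] (x y : G) (h : altProd n x y = altProd n y x) :
    DihedralArtinGroup n →* G :=
  PresentedGroup.toGroup (f := fun s => cond s x y) <| by
    rintro r rfl
    simp [map_altProd, h]

theorem lift_daGen {G : Type*} [Group G] (x y : G) (h : altProd n x y = altProd n y x)
    (s : Bool) : lift x y h (daGen n s) = cond s x y :=
  PresentedGroup.toGroup.of _

theorem lift_daWord {G : Type*} [Group G] (x y : G) (h : altProd n x y = altProd n y x)
    (l : List Bool) : lift x y h (daWord n l) = (l.map fun s => cond s x y).prod := by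
  simp [daWord, map_list_prod, Function.comp_def, lift_daGen]

theorem lift_daAlt {G : Type*} [Group G] (x y : G) (h : altProd n x y = altProd n y x)
    (γ : Bool) (k : ℕ) : lift x y h (daAlt n γ k) = altProd k (cond γ x y) (cond γ y x) := by
  rw [daAlt, lift_daWord, prod_map_altList]
  cases γ <;> rfl

def length (n : ℕ) : DihedralArtinGroup n →* Multiplicative ℤ :=
  lift (.ofAdd 1) (.ofAdd 1) rfl

@[simp]
theorem toAdd_length_daAlt (γ : Bool) (k : ℕ) : (length n (daAlt n γ k)).toAdd = k := by
  cases γ <;> simp [length, lift_daAlt, altProd_self]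

theorem add_eq_add_of_daAlt_mul_daAlt_eq {α β γ δ : Bool} {i j k l : ℕ}
    (h : daAlt n α i * daAlt n β j = daAlt n γ k * daAlt n δ l) : i + j = k + l := by
  have := congrArg (fun x => (length n x).toAdd) h
  simp only [map_mul, toAdd_mul, toAdd_length_daAlt] at this
  omega

theorem garside_ne_daAlt {k : ℕ} (hk : k < n) (γ : Bool) : garside n ≠ daAlt n γ k := by
  intro h
  have := congrArg (fun x => (length n x).toAdd) h
  simp [garside] at this
  omega

open Monoid CoprodI

/-- `Syllable n true = ℤ/n` and `Syllable n false = ℤ/2`, the factors of `ℤ/n ∗ ℤ/2`. -/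
abbrev Syllable (n : ℕ) (i : Bool) : Type := Multiplicative (ZMod (cond i n 2))

def rot (n : ℕ) : CoprodI (Syllable n) := of (i := true) (.ofAdd 1)

def swap (n : ℕ) : CoprodI (Syllable n) := of (i := false) (.ofAdd 1)

theorem rot_pow (k : ℕ) : rot n ^ k = of (i := true) (.ofAdd (k : ZMod n)) := by
  rw [rot, ← map_pow, ← ofAdd_nsmul, nsmul_one]

theorem swap_mul_swap : swap n * swap n = 1 := by
  rw [swap, ← map_mul, ← ofAdd_add, show (1 : ZMod 2) + 1 = 0 by decide, ofAdd_zero, map_one]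

theorem altProd_rot_swap_comm :
    altProd n (rot n * swap n) (swap n * rot n) = altProd n (swap n * rot n) (rot n * swap n) := by
  obtain ⟨h₁, h₂⟩ := altProd_mul_involution swap_mul_swap (rot n) n
  have hn : rot n ^ n = 1 := by rw [rot_pow, ZMod.natCast_self, ofAdd_zero, map_one]
  rw [h₁, h₂, hn]
  cases n.bodd <;> simp [swap_mul_swap]

def toCoprodI (n : ℕ) : DihedralArtinGroup n →* CoprodI (Syllable n) :=
  lift (rot n * swap n) (swap n * rot n) altProd_rot_swap_comm

theorem toCoprodI_daAlt_true (k : ℕ) :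
    toCoprodI n (daAlt n true k) = rot n ^ k * (if k.bodd then swap n else 1) :=
  (lift_daAlt _ _ _ _ _).trans (altProd_mul_involution swap_mul_swap (rot n) k).1

theorem toCoprodI_daAlt_false (k : ℕ) :
    toCoprodI n (daAlt n false k) = swap n * rot n ^ k * (if k.bodd then 1 else swap n) :=
  (lift_daAlt _ _ _ _ _).trans (altProd_mul_involution swap_mul_swap (rot n) k).2

theorem fstIdx_toCoprodI_daAlt_smul {γ : Bool} {k : ℕ} (hk : 0 < k) (hkn : k < n)
    {w : Word (Syllable n)} (hw : w.fstIdx ≠ some (altLetter γ k)) :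
    (toCoprodI n (daAlt n γ k) • w).fstIdx = some γ := by
  have hr : (.ofAdd (k : ZMod n) : Syllable n true) ≠ 1 := by
    intro h
    have h' : (k : ZMod n) = 0 := h
    rw [ZMod.natCast_eq_zero_iff] at h'
    exact absurd (Nat.le_of_dvd hk h') (by omega)
  have ht : (.ofAdd 1 : Syllable n false) ≠ 1 := by
    show Multiplicative.ofAdd (1 : ZMod 2) ≠ 1
    decide
  open Word in
  cases γ <;> cases hb : k.bodd <;>
    simp only [altLetter, hb, Bool.xor_false, Bool.xor_true, Bool.not_false, Bool.not_true]
      at hw <;>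
    simp only [toCoprodI_daAlt_true, toCoprodI_daAlt_false, hb, rot_pow, mul_smul, swap,
      if_true, if_false, Bool.false_eq_true, one_smul]
  case false.false =>
    exact fstIdx_of_smul ht (by rw [fstIdx_of_smul hr (by rw [fstIdx_of_smul ht hw]; simp)]; simp)
  case false.true => exact fstIdx_of_smul ht (by rw [fstIdx_of_smul hr hw]; simp)
  case true.false => exact fstIdx_of_smul hr hw
  case true.true => exact fstIdx_of_smul hr (by rw [fstIdx_of_smul ht hw]; simp)

def headIdx (x : DihedralArtinGroup n) : Option Bool :=
  (toCoprodI n x • (Word.empty : Word (Syllable n))).fstIdx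

theorem headIdx_daAlt_mul {γ : Bool} {k : ℕ} (hk : 0 < k) (hkn : k < n)
    {x : DihedralArtinGroup n} (hx : headIdx x ≠ some (altLetter γ k)) :
    headIdx (daAlt n γ k * x) = some γ := by
  rw [headIdx, map_mul, mul_smul]
  exact fstIdx_toCoprodI_daAlt_smul hk hkn hx

theorem headIdx_daAlt {γ : Bool} {k : ℕ} (hk : 0 < k) (hkn : k < n) :
    headIdx (daAlt n γ k) = some γ := by
  simpa using headIdx_daAlt_mul (x := 1) hk hkn (by simp [headIdx, Word.fstIdx])

theorem headIdx_daAlt_mul_daAlt {γ : Bool} {K I : ℕ} (hK : 0 < K) (hKn : K < n) (hI : 0 < I)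
    (hIn : I < n) : headIdx (daAlt n γ K * daAlt n (!altLetter γ K) I) = some γ :=
  headIdx_daAlt_mul hK hKn (by simp [headIdx_daAlt hI hIn])

theorem daAlt_ne_daAlt_not (hn : 0 < n) (γ : Bool) {k : ℕ} (hk : ¬ n ∣ k) :
    daAlt n γ k ≠ daAlt n (!γ) k := by
  induction k using Nat.strong_induction_on generalizing γ with
  | _ k ih =>
  intro h
  rcases lt_or_ge k n with hkn | hkn
  · have hk0 : 0 < k := Nat.pos_of_ne_zero (by rintro rfl; exact hk (dvd_zero n))
    have := congrArg headIdx h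
    rw [headIdx_daAlt hk0 hkn, headIdx_daAlt hk0 hkn] at this
    simp at this
  · obtain ⟨j, rfl⟩ := Nat.exists_eq_add_of_le hkn
    rw [daAlt_self_add, daAlt_self_add, altLetter_not] at h
    exact ih j (by omega) _ (by simpa [Nat.dvd_add_right] using hk) (mul_left_cancel h)

theorem daAlt_mul_daAlt_eq_or (γ α : Bool) (d : ℕ) {i : ℕ} (hi : i ≤ n) :
    daAlt n γ d * daAlt n α i = daAlt n γ (d + i) ∨ (α = !altLetter γ d ∧ 0 < i ∧ i < n) := by
  rcases Nat.eq_zero_or_pos i with rfl | hi0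
  · simp
  rcases hi.lt_or_eq with hin | rfl
  · by_cases hα : α = altLetter γ d
    · left
      rw [daAlt_add, hα]
    · exact Or.inr ⟨Bool.eq_not_iff.2 hα, hi0, hin⟩
  · left
    rw [daAlt_add, daAlt_self, daAlt_self]

theorem daAlt_mul_ne_daAlt {γ γ' : Bool} {K I : ℕ} {x : DihedralArtinGroup n} (hK : 0 < K)
    (hI : 0 < I) (hKI : K + I ≤ n) (hx : headIdx x = some (!altLetter γ K)) :
    daAlt n γ K * x ≠ daAlt n γ' (K + I) := by
  intro h
  by_cases hγ' : γ' = γ ∨ K + I = n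
  · have hsplit : daAlt n γ' (K + I) = daAlt n γ K * daAlt n (altLetter γ K) I := by
      rw [← daAlt_add]
      rcases hγ' with rfl | hKI'
      · rfl
      · rw [hKI', daAlt_self, daAlt_self]
    have hhead := headIdx_daAlt (γ := altLetter γ K) hI (by omega : I < n)
    rw [hsplit] at h
    rw [← mul_left_cancel h, hx] at hhead
    simp at hhead
  · obtain ⟨hγ', hKI'⟩ := not_or.1 hγ'
    have hhead := headIdx_daAlt_mul (γ := γ) hK (by omega) (x := x) (by simp [hx])
    rw [h, headIdx_daAlt (by omega) (lt_of_le_of_ne hKI hKI')] at hhead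
    exact hγ' (Option.some_injective _ hhead)

theorem daAlt_not_add_ne_daAlt_mul_daAlt {γ : Bool} {d j : ℕ} (hd : 0 < d) (hdn : d < n)
    (hj : 0 < j) (hjn : j < n) :
    daAlt n (!γ) (d + j) ≠ daAlt n γ d * daAlt n (!altLetter γ d) j := by
  intro h
  rcases le_or_gt (d + j) n with hle | hgt
  · exact daAlt_mul_ne_daAlt hd hj hle (headIdx_daAlt hj hjn) h.symm
  obtain ⟨m, hm⟩ := Nat.exists_eq_add_of_le hgt.le
  rw [hm, daAlt_self_add, ← daAlt_mul_daAlt_sub hdn.le γ, mul_assoc] at h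
  have hhead : headIdx (daAlt n (altLetter (!γ) n) m) =
      some (!altLetter (altLetter γ d) (n - d)) := by
    rw [headIdx_daAlt (by omega) (by omega), ← altLetter_add, Nat.add_sub_cancel' hdn.le,
      altLetter_not]
  have h' := mul_left_cancel h
  rw [show j = n - d + m by omega] at h'
  exact daAlt_mul_ne_daAlt (by omega) (by omega) (by omega) hhead h'

theorem mem_precellVerts_iff {g z : DihedralArtinGroup n} :
    z ∈ precellVerts n g ↔ ∃ γ i, i ≤ n ∧ z = g * daAlt n γ i := by
  constructor
  · rintro ⟨p, hp | hp, rfl⟩ <;>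
    · obtain ⟨i, hi, rfl⟩ := prefix_altList_iff.1 hp
      exact ⟨_, i, hi, rfl⟩
  · rintro ⟨γ, i, hi, rfl⟩
    refine ⟨_, ?_, rfl⟩
    cases γ
    · exact Or.inr (prefix_altList_iff.2 ⟨i, hi, rfl⟩)
    · exact Or.inl (prefix_altList_iff.2 ⟨i, hi, rfl⟩)

theorem mul_daAlt_mem_precellVerts {g : DihedralArtinGroup n} {γ : Bool} {i : ℕ} (hi : i ≤ n) :
    g * daAlt n γ i ∈ precellVerts n g :=
  mem_precellVerts_iff.2 ⟨γ, i, hi, rfl⟩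

theorem mul_daAlt_mem_precellVerts_mul_daAlt {g : DihedralArtinGroup n} {γ : Bool} {d k : ℕ}
    (hdk : d ≤ k) (hk : k ≤ d + n) : g * daAlt n γ k ∈ precellVerts n (g * daAlt n γ d) := by
  rw [← Nat.add_sub_cancel' hdk, daAlt_add, ← mul_assoc]
  exact mul_daAlt_mem_precellVerts (by omega)

theorem exists_of_mem_precellEdges {g : DihedralArtinGroup n} {e : DihedralArtinGroup n × Bool}
    (he : e ∈ precellEdges n g) : ∃ γ i, i < n ∧ e = (g * daAlt n γ i, altLetter γ i) := by
  obtain ⟨p, s, ⟨-, hp⟩ | ⟨-, hp⟩, rfl⟩ := he <;>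
  · obtain ⟨i, hi, rfl, rfl⟩ := append_singleton_prefix_altList hp
    exact ⟨_, i, hi, rfl⟩

theorem eq_mul_daAlt_of_mul_daAlt_eq {g g' : DihedralArtinGroup n} {α β : Bool} {i j : ℕ}
    (hji : j ≤ i) (h : g * daAlt n α i = g' * daAlt n β j)
    (hl : altLetter α i = altLetter β j) : g' = g * daAlt n α (i - j) := by
  have hβ : β = altLetter α (i - j) :=
    altLetter_left_injective j (by simp only; rw [← altLetter_add, Nat.sub_add_cancel hji, hl])
  rw [← Nat.sub_add_cancel hji, daAlt_add, ← hβ, ← mul_assoc] at h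
  exact (mul_right_cancel h).symm

theorem exists_eq_mul_daAlt_of_precellEdges_inter {g g' : DihedralArtinGroup n} (hne : g ≠ g')
    (h : (precellEdges n g ∩ precellEdges n g').Nonempty) :
    ∃ δ d, 0 < d ∧ d < n ∧ (g' = g * daAlt n δ d ∨ g = g' * daAlt n δ d) := by
  obtain ⟨e, he, he'⟩ := h
  obtain ⟨α, i, hi, rfl⟩ := exists_of_mem_precellEdges he
  obtain ⟨β, j, hj, he'⟩ := exists_of_mem_precellEdges he'
  obtain ⟨h₁, h₂⟩ := Prod.ext_iff.1 he'
  rcases le_total j i with hji | hij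
  · have hg := eq_mul_daAlt_of_mul_daAlt_eq hji h₁ h₂
    refine ⟨α, i - j, Nat.pos_of_ne_zero fun h0 => hne ?_, by omega, Or.inl hg⟩
    rw [hg, h0, daAlt_zero, mul_one]
  · have hg := eq_mul_daAlt_of_mul_daAlt_eq hij h₁.symm h₂.symm
    refine ⟨β, j - i, Nat.pos_of_ne_zero fun h0 => hne ?_, by omega, Or.inr hg⟩
    rw [hg, h0, daAlt_zero, mul_one]

theorem prod_map_inv_daGen (l : List Bool) :
    (l.map fun s => (daGen n s)⁻¹).prod = (daWord n l.reverse)⁻¹ := by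
  rw [daWord, List.prod_inv_reverse, List.map_map, ← List.map_reverse, List.reverse_reverse]
  rfl

theorem prod_map_inv_daGen_altList (γ : Bool) (k : ℕ) :
    ((altList k γ (!γ)).map fun s => (daGen n s)⁻¹).prod = (daAlt n (!altLetter γ k) k)⁻¹ := by
  rw [prod_map_inv_daGen, reverse_altList, daAlt, Bool.not_not]

theorem altProd_inv_daGen_comm :
    altProd n (daGen n true)⁻¹ (daGen n false)⁻¹ =
      altProd n (daGen n false)⁻¹ (daGen n true)⁻¹ := by
  have h (γ : Bool) : altProd n (daGen n γ)⁻¹ (daGen n (!γ))⁻¹ = (garside n)⁻¹ := by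
    rw [← prod_map_altList (fun s => (daGen n s)⁻¹), prod_map_inv_daGen_altList, daAlt_self]
  exact (h true).trans (h false).symm

def iota (n : ℕ) : DihedralArtinGroup n →* DihedralArtinGroup n :=
  lift (daGen n true)⁻¹ (daGen n false)⁻¹ altProd_inv_daGen_comm

theorem iota_daGen (s : Bool) : iota n (daGen n s) = (daGen n s)⁻¹ := by
  rw [iota, lift_daGen]
  cases s <;> rfl

theorem iota_daAlt (γ : Bool) (k : ℕ) :
    iota n (daAlt n γ k) = (daAlt n (!altLetter γ k) k)⁻¹ := by
  rw [← prod_map_inv_daGen_altList, daAlt, daWord, map_list_prod, List.map_map]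
  simp only [Function.comp_def, iota_daGen]

theorem iota_involutive : Function.Involutive (iota n) := by
  have h : (iota n).comp (iota n) = MonoidHom.id _ :=
    PresentedGroup.ext fun s => by
      change iota n (iota n (daGen n s)) = daGen n s
      rw [iota_daGen, map_inv, iota_daGen, inv_inv]
  exact DFunLike.congr_fun h

theorem iota_garside : iota n (garside n) = (garside n)⁻¹ := by
  rw [garside, iota_daAlt, daAlt_self, garside]

theorem iota_eq_mul_daAlt {g g' : DihedralArtinGroup n} {δ : Bool} {d : ℕ}
    (h : g = g' * daAlt n δ d) : iota n g' = iota n g * daAlt n (!altLetter δ d) d := by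
  rw [h, map_mul, iota_daAlt, inv_mul_cancel_right]

def mirror (n : ℕ) (z : DihedralArtinGroup n) : DihedralArtinGroup n := iota n z * garside n

theorem mirror_involutive : Function.Involutive (mirror n) := by
  intro z
  rw [mirror, mirror, map_mul, iota_involutive z, iota_garside, inv_mul_cancel_right]

theorem mirror_mem_precellVerts {g z : DihedralArtinGroup n} (hz : z ∈ precellVerts n g) :
    mirror n z ∈ precellVerts n (iota n g) := by
  obtain ⟨γ, i, hi, rfl⟩ := mem_precellVerts_iff.1 hz
  refine mem_precellVerts_iff.2 ⟨altLetter (!altLetter γ i) i, n - i, Nat.sub_le n i, ?_⟩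
  rw [mirror, map_mul, iota_daAlt, mul_assoc, ← daAlt_mul_daAlt_sub hi, inv_mul_cancel_left]

theorem precellVerts_iota (g : DihedralArtinGroup n) :
    precellVerts n (iota n g) = mirror n '' precellVerts n g := by
  refine Set.Subset.antisymm (fun z hz => ⟨mirror n z, ?_, mirror_involutive z⟩) ?_
  · simpa [iota_involutive g] using mirror_mem_precellVerts hz
  · rintro _ ⟨z, hz, rfl⟩
    exact mirror_mem_precellVerts hz

theorem eq_mul_garside_of_mem_inter {g₁ g₂ g₃ z : DihedralArtinGroup n} {p : Bool} {d₂ d₃ : ℕ}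
    (hd₂ : 0 < d₂) (hd₂n : d₂ < n) (hd₃ : 0 < d₃) (hd₃n : d₃ < n)
    (h₂ : g₂ = g₁ * daAlt n p d₂) (h₃ : g₃ = g₁ * daAlt n (!p) d₃)
    (hz : z ∈ precellVerts n g₂ ∩ precellVerts n g₃) : z = g₁ * garside n := by
  obtain ⟨α, i, hi, hz₂⟩ := mem_precellVerts_iff.1 hz.1
  obtain ⟨β, j, hj, hz₃⟩ := mem_precellVerts_iff.1 hz.2
  have E : daAlt n p d₂ * daAlt n α i = daAlt n (!p) d₃ * daAlt n β j := by
    rw [hz₂, h₂, mul_assoc, h₃, mul_assoc] at hz₃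
    exact mul_left_cancel hz₃
  have hlen := add_eq_add_of_daAlt_mul_daAlt_eq E
  rcases daAlt_mul_daAlt_eq_or p α d₂ hi with h₂' | ⟨hα, hi0, hin⟩ <;>
  rcases daAlt_mul_daAlt_eq_or (!p) β d₃ hj with h₃' | ⟨hβ, hj0, hjn⟩
  · rw [h₂', h₃', ← hlen] at E
    obtain ⟨c, hc⟩ : n ∣ d₂ + i := not_not.1 fun h => daAlt_ne_daAlt_not (by omega) p h E
    have hc1 : c = 1 := by
      rcases c with _ | _ | c <;> [omega; rfl; nlinarith]
    rw [hz₂, h₂, mul_assoc, h₂', hc, hc1, mul_one, daAlt_self]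
  · refine absurd ?_ (daAlt_not_add_ne_daAlt_mul_daAlt (γ := !p) hd₃ hd₃n hj0 hjn)
    rw [Bool.not_not, ← hlen, ← h₂', E, hβ]
  · refine absurd ?_ (daAlt_not_add_ne_daAlt_mul_daAlt (γ := p) hd₂ hd₂n hi0 hin)
    rw [hlen, ← h₃', ← E, hα]
  · have := congrArg headIdx E
    rw [hα, hβ, headIdx_daAlt_mul_daAlt hd₂ hd₂n hi0 hin,
      headIdx_daAlt_mul_daAlt hd₃ hd₃n hj0 hjn] at this
    cases p <;> simp at this

theorem mem_precellVerts_of_mem_inter {g₁ g₂ g₃ z : DihedralArtinGroup n} {p r : Bool}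
    {d₂ d₃ : ℕ} (hd₂ : 0 < d₂) (hd₃ : 0 < d₃) (h₂ : g₂ = g₁ * daAlt n p d₂)
    (h₃ : g₁ = g₃ * daAlt n r d₃) (hz : z ∈ precellVerts n g₂ ∩ precellVerts n g₃) :
    z ∈ precellVerts n g₁ := by
  obtain ⟨α, i, hi, hz₂⟩ := mem_precellVerts_iff.1 hz.1
  obtain ⟨α', i', hi', hz₃⟩ := mem_precellVerts_iff.1 hz.2
  have E : daAlt n r d₃ * daAlt n p d₂ * daAlt n α i = daAlt n α' i' := by
    rw [hz₂, h₂, h₃, mul_assoc, mul_assoc, ← mul_assoc (daAlt n r d₃)] at hz₃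
    exact mul_left_cancel hz₃
  have hlen : d₃ + d₂ + i = i' := by
    have := congrArg (fun x => (length n x).toAdd) E
    simp only [map_mul, toAdd_mul, toAdd_length_daAlt] at this
    omega
  rcases daAlt_mul_daAlt_eq_or p α d₂ hi with hmerge | ⟨hα, hi0, hin⟩
  · rw [hz₂, h₂, mul_assoc, hmerge]
    exact mul_daAlt_mem_precellVerts (by omega)
  exfalso
  rw [← hlen] at E
  by_cases hp : p = altLetter r d₃
  · rw [hp, ← daAlt_add] at E
    refine daAlt_mul_ne_daAlt (by omega) hi0 (by omega) ?_ E
    rw [headIdx_daAlt hi0 hin, hα, hp, altLetter_add]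
  · rw [mul_assoc, add_assoc] at E
    refine daAlt_mul_ne_daAlt hd₃ (by omega) (by omega) ?_ E
    rw [← Bool.eq_not_iff.2 hp, hα]
    exact headIdx_daAlt_mul_daAlt hd₂ (by omega) hi0 hin

theorem not_subsingleton_inter_of_le {g : DihedralArtinGroup n} {p : Bool} {d₂ d₃ : ℕ}
    (hd : d₂ ≤ d₃) (hd₃n : d₃ < n) :
    ¬ (precellVerts n g ∩ precellVerts n (g * daAlt n p d₂) ∩
      precellVerts n (g * daAlt n p d₃)).Subsingleton := by
  intro hv
  have hΔ : g * daAlt n p n ∈ precellVerts n g ∩ precellVerts n (g * daAlt n p d₂) ∩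
      precellVerts n (g * daAlt n p d₃) :=
    ⟨⟨mul_daAlt_mem_precellVerts le_rfl,
      mul_daAlt_mem_precellVerts_mul_daAlt (by omega) (by omega)⟩,
      mul_daAlt_mem_precellVerts_mul_daAlt (by omega) (by omega)⟩
  have hg₃ : g * daAlt n p d₃ ∈ precellVerts n g ∩ precellVerts n (g * daAlt n p d₂) ∩
      precellVerts n (g * daAlt n p d₃) :=
    ⟨⟨mul_daAlt_mem_precellVerts hd₃n.le, mul_daAlt_mem_precellVerts_mul_daAlt hd (by omega)⟩,
      mul_daAlt_mem_precellVerts_mul_daAlt le_rfl (by omega)⟩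
  rw [daAlt_self] at hΔ
  exact garside_ne_daAlt hd₃n p (mul_left_cancel (hv hΔ hg₃))

theorem subsingleton_inter_of_eq_mul_daAlt {g₁ g₂ g₃ : DihedralArtinGroup n} {p r : Bool}
    {d₂ d₃ : ℕ} (hd₂ : 0 < d₂) (hd₂n : d₂ < n) (hd₃ : 0 < d₃) (hd₃n : d₃ < n)
    (h₂ : g₂ = g₁ * daAlt n p d₂) (h₃ : g₃ = g₁ * daAlt n r d₃)
    (hv : (precellVerts n g₁ ∩ precellVerts n g₂ ∩ precellVerts n g₃).Subsingleton) :
    (precellVerts n g₂ ∩ precellVerts n g₃).Subsingleton := by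
  obtain rfl | rfl : r = p ∨ r = !p := by cases p <;> cases r <;> simp
  · subst h₂ h₃
    rcases le_total d₂ d₃ with hd | hd
    · exact absurd hv (not_subsingleton_inter_of_le hd hd₃n)
    · exact absurd (Set.inter_right_comm _ _ _ ▸ hv) (not_subsingleton_inter_of_le hd hd₂n)
  · intro x hx y hy
    rw [eq_mul_garside_of_mem_inter hd₂ hd₂n hd₃ hd₃n h₂ h₃ hx,
      eq_mul_garside_of_mem_inter hd₂ hd₂n hd₃ hd₃n h₂ h₃ hy]

end DihedralArtinGroup

open DihedralArtinGroup in
theorem precell_pairwise_intersection_general (n : ℕ)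
    (g₁ g₂ g₃ : DihedralArtinGroup n)
    (h12 : g₁ ≠ g₂) (h13 : g₁ ≠ g₃)
    (he12 : (precellEdges n g₁ ∩ precellEdges n g₂).Nonempty)
    (he13 : (precellEdges n g₁ ∩ precellEdges n g₃).Nonempty)
    (hv : (precellVerts n g₁ ∩ precellVerts n g₂ ∩ precellVerts n g₃).Subsingleton) :
    (precellVerts n g₂ ∩ precellVerts n g₃).Subsingleton := by
  obtain ⟨δ₂, d₂, hd₂, hd₂n, h₂ | h₂⟩ := exists_eq_mul_daAlt_of_precellEdges_inter h12 he12 <;>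
  obtain ⟨δ₃, d₃, hd₃, hd₃n, h₃ | h₃⟩ := exists_eq_mul_daAlt_of_precellEdges_inter h13 he13
  · exact subsingleton_inter_of_eq_mul_daAlt hd₂ hd₂n hd₃ hd₃n h₂ h₃ hv
  · exact hv.anti fun z hz => ⟨⟨mem_precellVerts_of_mem_inter hd₂ hd₃ h₂ h₃ hz, hz.1⟩, hz.2⟩
  · exact hv.anti fun z hz =>
      ⟨⟨mem_precellVerts_of_mem_inter hd₃ hd₂ h₃ h₂ ⟨hz.2, hz.1⟩, hz.1⟩, hz.2⟩
  · have hv' : (precellVerts n (iota n g₁) ∩ precellVerts n (iota n g₂) ∩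
        precellVerts n (iota n g₃)).Subsingleton := by
      simpa only [precellVerts_iota, ← Set.image_inter mirror_involutive.injective]
        using hv.image (mirror n)
    have h := subsingleton_inter_of_eq_mul_daAlt hd₂ hd₂n hd₃ hd₃n (iota_eq_mul_daAlt h₂)
      (iota_eq_mul_daAlt h₃) hv'
    rwa [precellVerts_iota, precellVerts_iota, ← Set.image_inter mirror_involutive.injective,
      mirror_involutive.injective.subsingleton_image_iff] at h

/-- If three pairwise distinct precells are such that the first
shares an edge with each of the other two and the triple intersection of their vertex
sets has at most one point, then the second and third precells intersect in at most
one point. -/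
theorem precell_pairwise_intersection (n : ℕ) (hn : 2 ≤ n)
    (g₁ g₂ g₃ : DihedralArtinGroup n)
    (h12 : g₁ ≠ g₂) (h13 : g₁ ≠ g₃) (h23 : g₂ ≠ g₃)
    (he12 : (precellEdges n g₁ ∩ precellEdges n g₂).Nonempty)
    (he13 : (precellEdges n g₁ ∩ precellEdges n g₃).Nonempty)
    (hv : (precellVerts n g₁ ∩ precellVerts n g₂ ∩ precellVerts n g₃).Subsingleton) :
    (precellVerts n g₂ ∩ precellVerts n g₃).Subsingleton :=
  precell_pairwise_intersection_general n g₁ g₂ g₃ h12 h13 he12 he13 hv
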